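/- arXiv:1712.06512 — 6 statements merged into one kernel-verified Lean document; each statement's English description precedes it below -/
import Mathlib

section
/- Let K be an algebraically closed field of characteristic 0 and let g, h be monomials in K[x_1,...,x_k] with disjoint supports, at least one of which is non-constant. Then the polynomial g^d + h^d has no repeated irreducible factors in K[x_1,...,x_k]. -/
/-!
If `p * p` divides `F = g ^ d + h ^ d`, then `p` divides every partial derivative of `F`. Pick a
variable `X i` occurring in `g`; it does not occur in `h`, so `X i * ∂F/∂X i = (d * u i) • g ^ d`,
and `d * u i` is invertible in characteristic zero. Hence `p` divides `g ^ d` and then `h ^ d`;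
these are monomials with disjoint supports, whose only common divisors are units.
-/

open MvPolynomial

theorem Derivation.dvd_apply_of_mul_self_dvd {R A : Type*} [CommSemiring R] [CommSemiring A]
    [Algebra R A] (D : Derivation R A A) {p f : A} (h : p * p ∣ f) : p ∣ D f := by
  obtain ⟨q, rfl⟩ := h
  rw [mul_assoc, D.leibniz, D.leibniz]
  simp only [smul_eq_mul]
  exact dvd_add (dvd_mul_right _ _) (dvd_mul_of_dvd_left (dvd_mul_right _ _) _)

namespace MvPolynomial

theorem C_mul_prod_X_pow_eq_monomial {σ R : Type*} [Fintype σ] [CommSemiring R] (u : σ → ℕ)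
    (a : R) : C a * ∏ i, X i ^ u i = monomial (Finsupp.equivFunOnFinite.symm u) a := by
  rw [monomial_eq, Finsupp.prod_pow]
  rfl

variable {σ K : Type*} [Field K] {s t : σ →₀ ℕ} {a b : K}

theorem isRelPrime_monomial_monomial (ha : a ≠ 0) (hb : b ≠ 0)
    (hdisj : ∀ i, s i = 0 ∨ t i = 0) : IsRelPrime (monomial s a) (monomial t b) := by
  intro p hps hpt
  obtain ⟨m, c, hms, hca, rfl⟩ := (dvd_monomial_iff_exists ha).1 hps
  obtain ⟨m', c', hmt, -, hp⟩ := (dvd_monomial_iff_exists hb).1 hpt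
  have hc : c ≠ 0 := by rintro rfl; exact ha (zero_dvd_iff.1 hca)
  obtain rfl : m = m' := ((monomial_eq_monomial_iff _ _ _ _).1 hp).elim And.left
    fun h => absurd h.1 hc
  obtain rfl : m = 0 := Finsupp.ext fun i => by
    have := hms i; have := hmt i; rcases hdisj i with h | h <;> simp <;> omega
  exact (isUnit_iff_ne_zero.2 hc).map C

theorem squarefree_monomial_add_monomial_of_ne_zero [CharZero K] (ha : a ≠ 0) (hb : b ≠ 0)
    (hdisj : ∀ i, s i = 0 ∨ t i = 0) {i : σ} (hsi : s i ≠ 0) :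
    Squarefree (monomial s a + monomial t b) := by
  intro p hp
  have hti : t i = 0 := (hdisj i).resolve_left hsi
  have euler : X i * pderiv i (monomial s a + monomial t b) = C (s i : K) * monomial s a := by
    rw [map_add, mul_add, X_mul_pderiv_monomial, X_mul_pderiv_monomial, hti, zero_smul,
      add_zero, nsmul_eq_mul, map_natCast]
  have hunit : IsUnit (C (s i : K) : MvPolynomial σ K) :=
    (isUnit_iff_ne_zero.2 (Nat.cast_ne_zero.2 hsi)).map C
  have hps : p ∣ monomial s a :=
    hunit.dvd_mul_left.1 (euler ▸ ((pderiv i).dvd_apply_of_mul_self_dvd hp).mul_left (X i))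
  have hpt : p ∣ monomial t b := (dvd_add_right hps).1 (dvd_of_mul_left_dvd hp)
  exact isRelPrime_monomial_monomial ha hb hdisj hps hpt

theorem squarefree_monomial_add_monomial [CharZero K] (ha : a ≠ 0) (hb : b ≠ 0)
    (hdisj : ∀ i, s i = 0 ∨ t i = 0) (hst : s ≠ 0 ∨ t ≠ 0) :
    Squarefree (monomial s a + monomial t b) := by
  rcases hst with hs | ht
  · obtain ⟨i, hi⟩ := Finsupp.ne_iff.1 hs
    exact squarefree_monomial_add_monomial_of_ne_zero ha hb hdisj hi
  · obtain ⟨i, hi⟩ := Finsupp.ne_iff.1 ht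
    rw [add_comm]
    exact squarefree_monomial_add_monomial_of_ne_zero hb ha (fun j => (hdisj j).symm) hi

end MvPolynomial

theorem stmt1_general {K : Type*} [Field K] [CharZero K] {k : ℕ}
    (u v : Fin k → ℕ) (a b : K) (ha : a ≠ 0) (hb : b ≠ 0)
    (hdisj : ∀ i, u i = 0 ∨ v i = 0) (hnc : u ≠ 0 ∨ v ≠ 0)
    (g h : MvPolynomial (Fin k) K)
    (hg : g = MvPolynomial.C a * ∏ i, MvPolynomial.X i ^ u i)
    (hh : h = MvPolynomial.C b * ∏ i, MvPolynomial.X i ^ v i)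
    (d : ℕ) :
    Squarefree (g ^ d + h ^ d) := by
  rcases eq_or_ne d 0 with rfl | hd
  · rw [pow_zero, pow_zero, ← C_1, ← C_add]
    exact ((isUnit_iff_ne_zero.2 (by norm_num)).map C).squarefree
  rw [hg, hh, C_mul_prod_X_pow_eq_monomial, C_mul_prod_X_pow_eq_monomial, monomial_pow,
    monomial_pow]
  refine squarefree_monomial_add_monomial (pow_ne_zero d ha) (pow_ne_zero d hb)
    (fun i => by rcases hdisj i with hi | hi <;> simp [hi]) ?_
  simpa [hd, Finsupp.ext_iff, funext_iff] using hnc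

/-- For monomials `g, h` with disjoint support over an algebraically closed field of
characteristic zero, at least one non-constant, `g^d + h^d` is squarefree
(no repeated irreducible factors). -/
theorem stmt1 {K : Type*} [Field K] [IsAlgClosed K] [CharZero K] {k : ℕ}
    (u v : Fin k → ℕ) (a b : K) (ha : a ≠ 0) (hb : b ≠ 0)
    (hdisj : ∀ i, u i = 0 ∨ v i = 0) (hnc : u ≠ 0 ∨ v ≠ 0)
    (g h : MvPolynomial (Fin k) K)
    (hg : g = MvPolynomial.C a * ∏ i, MvPolynomial.X i ^ u i)
    (hh : h = MvPolynomial.C b * ∏ i, MvPolynomial.X i ^ v i)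
    (d : ℕ) :
    Squarefree (g ^ d + h ^ d) :=
  stmt1_general u v a b ha hb hdisj hnc g h hg hh d
end

section
/- Let A be a Krull domain and S ⊆ A \ {0} a multiplicative set generated by prime elements. Then A is a unique factorization domain if and only if the localization S^{-1}A is a unique factorization domain. -/
/-- A Krull domain: a domain that is completely integrally closed and satisfies the
ascending chain condition on (integral) divisorial ideals. -/
def IsKrullDomain (A : Type*) [CommRing A] [IsDomain A] : Prop :=
  (∀ x : FractionRing A,
      (∃ c : FractionRing A, c ≠ 0 ∧
        ∀ n : ℕ, c * x ^ n ∈ (algebraMap A (FractionRing A)).range) →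
      x ∈ (algebraMap A (FractionRing A)).range) ∧
  WellFoundedGT {I : FractionalIdeal (nonZeroDivisors A) (FractionRing A) //
      I ≠ 0 ∧ I ≤ 1 ∧ 1 / (1 / I) = I}

set_option linter.unusedSectionVars false

section NagataAux

variable {A : Type*} [CommRing A] [IsDomain A]

theorem wfDvd_of_krull (hA : IsKrullDomain A) :
    WellFounded (DvdNotUnit : A → A → Prop) := by
  set K := FractionRing A with hK
  have hwf := hA.2.wf
  have hmap : Function.Injective (algebraMap A K) := IsFractionRing.injective A K
  set D := {I : FractionalIdeal (nonZeroDivisors A) K // I ≠ 0 ∧ I ≤ 1 ∧ 1 / (1 / I) = I}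
    with hD
  let mkD : {a : A // a ≠ 0} → D := fun a =>
    ⟨FractionalIdeal.spanSingleton (nonZeroDivisors A) (algebraMap A K a.1),
      (FractionalIdeal.spanSingleton_ne_zero_iff).mpr
        (fun h => a.2 (hmap (by simpa using h))),
      (FractionalIdeal.spanSingleton_le_iff_mem).mpr
        ((FractionalIdeal.mem_one_iff _).mpr ⟨a.1, rfl⟩),
      by rw [FractionalIdeal.one_div_spanSingleton, FractionalIdeal.one_div_spanSingleton,
        inv_inv]⟩
  -- proper divisibility increases the ideal
  have hlt : ∀ (a b : {x : A // x ≠ 0}), DvdNotUnit a.1 b.1 → mkD a > mkD b := by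
    rintro ⟨a, ha⟩ ⟨b, hb⟩ ⟨-, x, hx, rfl⟩
    constructor
    · refine (FractionalIdeal.spanSingleton_le_iff_mem).mpr ?_
      refine (FractionalIdeal.mem_spanSingleton _).mpr ⟨x, ?_⟩
      rw [Algebra.smul_def, ← map_mul, mul_comm]
    · intro hle
      have hmem := (FractionalIdeal.spanSingleton_le_iff_mem).mp hle
      obtain ⟨z, hz⟩ := (FractionalIdeal.mem_spanSingleton _).mp hmem
      rw [Algebra.smul_def, ← map_mul] at hz
      have : z * (a * x) = a := hmap hz
      apply hx
      refine IsUnit.of_mul_eq_one (a := x) z ?_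
      have h1 : a * (x * z) = a * 1 := by ring_nf; linear_combination this
      exact mul_left_cancel₀ ha h1
  -- transfer well-foundedness
  have hsub : WellFounded (fun (a b : {x : A // x ≠ 0}) => DvdNotUnit a.1 b.1) := by
    refine Subrelation.wf (r := fun a b => mkD a > mkD b) ?_ (InvImage.wf mkD hwf)
    exact fun {a b} h => hlt _ _ h
  have hacc : ∀ a : A, a ≠ 0 → Acc (DvdNotUnit : A → A → Prop) a := by
    intro a ha
    have : ∀ x : {x : A // x ≠ 0}, Acc (DvdNotUnit : A → A → Prop) x.1 := by
      intro x
      induction x using hsub.induction with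
      | _ x ih => exact ⟨x.1, fun b hb => ih ⟨b, hb.1⟩ hb⟩
    exact this ⟨a, ha⟩
  constructor
  intro a
  by_cases ha : a = 0
  · subst ha
    exact ⟨0, fun b hb => hacc b hb.1⟩
  · exact hacc a ha


end NagataAux

section X
variable {A : Type*} [CommRing A] [IsDomain A] {S : Submonoid A}
  {B : Type*} [CommRing B] [IsDomain B] [Algebra A B] [IsLocalization S B]

theorem sleNZD (hS0 : (0 : A) ∉ S) : S ≤ nonZeroDivisors A := fun s hs =>
  mem_nonZeroDivisors_of_ne_zero (by rintro rfl; exact hS0 hs)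

theorem loc_inj (hS0 : (0 : A) ∉ S) : Function.Injective (algebraMap A B) :=
  IsLocalization.injective B (sleNZD hS0)

theorem loc_extract (hS0 : (0 : A) ∉ S) {y a : A}
    (h : algebraMap A B y ∣ algebraMap A B a) : ∃ s ∈ S, ∃ c, s * a = y * c := by
  obtain ⟨z, hz⟩ := h
  obtain ⟨c, s, rfl⟩ := IsLocalization.exists_mk'_eq S z
  refine ⟨s, s.2, c, ?_⟩
  apply loc_inj (B := B) hS0
  have := congrArg (· * algebraMap A B s) hz
  simp only [mul_assoc, IsLocalization.mk'_spec] at this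
  rw [map_mul, map_mul, mul_comm (algebraMap A B s), this]

end X
section PrimeAux
variable {A : Type*} [CommRing A] [IsDomain A]

theorem cancel_S {P : Set A} (hP : ∀ p ∈ P, Prime p) {y : A} (hy : ∀ p ∈ P, ¬ p ∣ y)
    {s : A} (hs : s ∈ Submonoid.closure P) :
    ∀ a c : A, s * a = y * c → y ∣ a := by
  induction hs using Submonoid.closure_induction with
  | mem p hp =>
    intro a c h
    have hprime := hP p hp
    have hpd : p ∣ y * c := ⟨a, h.symm⟩
    rcases hprime.dvd_mul.mp hpd with h1 | h2
    · exact absurd h1 (hy p hp)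
    · obtain ⟨c', rfl⟩ := h2
      refine ⟨c', mul_left_cancel₀ hprime.ne_zero ?_⟩
      linear_combination h
  | one => intro a c h; exact ⟨c, by linear_combination h⟩
  | mul s t hs ht ihs iht =>
    intro a c h
    obtain ⟨c₂, hc₂⟩ := ihs (t * a) c (by linear_combination h)
    obtain ⟨c₃, hc₃⟩ := iht a c₂ hc₂
    exact ⟨c₃, hc₃⟩

theorem dvd_S_mem {P : Set A} (hP : ∀ p ∈ P, Prime p) {a : A} (ha : ¬ IsUnit a)
    {s : A} (hs : s ∈ Submonoid.closure P) (hdvd : a ∣ s) : ∃ p ∈ P, p ∣ a := by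
  obtain ⟨m, hm, rfl⟩ := Submonoid.exists_multiset_of_mem_closure hs
  clear hs
  induction m using Multiset.induction_on generalizing a with
  | empty =>
    simp only [Multiset.prod_zero] at hdvd
    exact absurd (isUnit_of_dvd_one hdvd) ha
  | cons p m ih =>
    have hp : p ∈ P := hm p (Multiset.mem_cons_self _ _)
    have hprime := hP p hp
    by_cases hpa : p ∣ a
    · exact ⟨p, hp, hpa⟩
    · obtain ⟨c, hc⟩ := hdvd
      rw [Multiset.prod_cons] at hc
      have hpd : p ∣ a * c := ⟨m.prod, hc.symm⟩
      rcases hprime.dvd_mul.mp hpd with h1 | h2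
      · exact absurd h1 hpa
      · obtain ⟨c', rfl⟩ := h2
        refine ih ha (fun q hq => hm q (Multiset.mem_cons_of_mem hq)) ?_
        refine ⟨c', mul_left_cancel₀ hprime.ne_zero ?_⟩
        linear_combination hc
end PrimeAux
section X2
variable {A : Type*} [CommRing A] [IsDomain A] {S : Submonoid A}
  {B : Type*} [CommRing B] [IsDomain B] [Algebra A B] [IsLocalization S B]

/-- pull back primality along localization, for `y` not divisible by any `p ∈ P` -/
theorem prime_pullback {P : Set A} (hP : ∀ p ∈ P, Prime p)
    (hSP : S = Submonoid.closure P) (hS0 : (0 : A) ∉ S) {y : A}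
    (hy : ∀ p ∈ P, ¬ p ∣ y) (hq : Prime (algebraMap A B y)) : Prime y := by
  have hy0 : y ≠ 0 := by rintro rfl; exact hq.ne_zero (map_zero _)
  have hyu : ¬ IsUnit y := fun h => hq.not_unit (h.map _)
  refine ⟨hy0, hyu, fun a b hab => ?_⟩
  have : algebraMap A B y ∣ algebraMap A B a * algebraMap A B b := by
    rw [← map_mul]; exact map_dvd _ hab
  rcases hq.dvd_mul.mp this with h | h
  · obtain ⟨s, hs, c, hsc⟩ := loc_extract hS0 h
    exact Or.inl (cancel_S hP hy (hSP ▸ hs) a c hsc)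
  · obtain ⟨s, hs, c, hsc⟩ := loc_extract hS0 h
    exact Or.inr (cancel_S hP hy (hSP ▸ hs) b c hsc)

/-- push primality forward: image of a prime is prime or a unit -/
theorem prime_pushforward (hS0 : (0 : A) ∉ S) {p : A} (hp : Prime p)
    (hu : ¬ IsUnit (algebraMap A B p)) : Prime (algebraMap A B p) := by
  refine ⟨fun h => hp.ne_zero (loc_inj (B := B) hS0 (by simpa using h)), hu, ?_⟩
  intro z w hzw
  obtain ⟨a, s, rfl⟩ := IsLocalization.exists_mk'_eq S z
  obtain ⟨b, t, rfl⟩ := IsLocalization.exists_mk'_eq S w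
  obtain ⟨v, hv⟩ := hzw
  obtain ⟨c, u, rfl⟩ := IsLocalization.exists_mk'_eq S v
  rw [← IsLocalization.mk'_mul] at hv
  rw [show algebraMap A B p * IsLocalization.mk' B c u = IsLocalization.mk' B (p * c) u by
    rw [IsLocalization.mk'_eq_mul_mk'_one, IsLocalization.mk'_eq_mul_mk'_one (p*c), map_mul];
      ring] at hv
  rw [IsLocalization.mk'_eq_iff_eq] at hv
  have heq := loc_inj (B := B) hS0 hv
  have hpd : p ∣ a * b * (u : A) := ⟨c * ((s : A) * t), by push_cast at heq ⊢; linear_combination heq⟩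
  rcases hp.dvd_mul.mp hpd with h | h
  · rcases hp.dvd_mul.mp h with h' | h'
    · left
      obtain ⟨d, rfl⟩ := h'
      rw [IsLocalization.mk'_eq_mul_mk'_one, map_mul]
      exact ⟨algebraMap A B d * IsLocalization.mk' B 1 s, by ring⟩
    · right
      obtain ⟨d, rfl⟩ := h'
      rw [IsLocalization.mk'_eq_mul_mk'_one, map_mul]
      exact ⟨algebraMap A B d * IsLocalization.mk' B 1 t, by ring⟩
  · exfalso
    apply hu
    obtain ⟨d, hd⟩ := h
    have : algebraMap A B u = algebraMap A B p * algebraMap A B d := by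
      rw [← map_mul, hd]
    exact isUnit_of_mul_isUnit_left (y := algebraMap A B d)
      (by rw [← this]; exact IsLocalization.map_units B u)
end X2

section Main
variable {A : Type*} [CommRing A] [IsDomain A] {S : Submonoid A}
  {B : Type*} [CommRing B] [IsDomain B] [Algebra A B] [IsLocalization S B]

theorem loc_unit_dvd (hS0 : (0 : A) ∉ S) {a : A}
    (h : IsUnit (algebraMap A B a)) : ∃ s ∈ S, a ∣ s := by
  obtain ⟨z, hz⟩ : ∃ z, algebraMap A B a * z = 1 := ⟨↑h.unit⁻¹, by simp⟩
  obtain ⟨c, s, rfl⟩ := IsLocalization.exists_mk'_eq S z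
  refine ⟨s, s.2, c, ?_⟩
  apply loc_inj (B := B) hS0
  have := congrArg (· * algebraMap A B s) hz
  simp only [mul_assoc, IsLocalization.mk'_spec, one_mul] at this
  rw [map_mul, ← this]

include S in
theorem loc_assoc (b : B) : ∃ a : A, Associated (algebraMap A B a) b := by
  obtain ⟨a, s, rfl⟩ := IsLocalization.exists_mk'_eq S b
  refine ⟨a, ?_⟩
  have hu : IsUnit (IsLocalization.mk' B (1 : A) s) :=
    IsUnit.of_mul_eq_one (algebraMap A B s)
      (by rw [IsLocalization.mk'_spec, map_one])
  exact ⟨hu.unit, by rw [IsUnit.unit_spec, ← IsLocalization.mk'_eq_mul_mk'_one]⟩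

/-- forward direction: a localization of a UFD is a UFD -/
theorem ufd_to_loc (hS0 : (0 : A) ∉ S) (h : UniqueFactorizationMonoid A) :
    UniqueFactorizationMonoid B := by
  apply UniqueFactorizationMonoid.of_exists_prime_factors
  intro b hb
  obtain ⟨a, hab⟩ := loc_assoc (S := S) b
  have ha : a ≠ 0 := by
    rintro rfl
    rw [map_zero] at hab
    exact hb ((associated_zero_iff_eq_zero b).mp hab.symm)
  obtain ⟨f, hf, hfa⟩ := UniqueFactorizationMonoid.exists_prime_factors a ha
  have key : ∀ f : Multiset A, (∀ p ∈ f, Prime p) →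
      ∃ g : Multiset B, (∀ q ∈ g, Prime q) ∧
        Associated g.prod (algebraMap A B f.prod) := by
    intro f
    induction f using Multiset.induction_on with
    | empty => intro _; exact ⟨0, by simp, by simp⟩
    | cons p f ih =>
      intro hpf
      obtain ⟨g, hg, hgf⟩ := ih (fun q hq => hpf q (Multiset.mem_cons_of_mem hq))
      by_cases hu : IsUnit (algebraMap A B p)
      · refine ⟨g, hg, ?_⟩
        rw [Multiset.prod_cons, map_mul]
        exact hgf.trans ⟨hu.unit, by rw [IsUnit.unit_spec]; ring⟩
      · refine ⟨algebraMap A B p ::ₘ g, ?_, ?_⟩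
        · intro q hq
          rcases Multiset.mem_cons.mp hq with rfl | hq
          · exact prime_pushforward hS0 (hpf p (Multiset.mem_cons_self _ _)) hu
          · exact hg q hq
        · rw [Multiset.prod_cons, Multiset.prod_cons, map_mul]
          exact hgf.mul_left _
  obtain ⟨g, hg, hgf⟩ := key f hf
  exact ⟨g, hg, hgf.trans ((hfa.map (algebraMap A B)).trans hab)⟩

/-- backward direction (Nagata) -/
theorem loc_to_ufd (hwf : WellFounded (DvdNotUnit : A → A → Prop))
    {P : Set A} (hP : ∀ p ∈ P, Prime p) (hSP : S = Submonoid.closure P)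
    (hS0 : (0 : A) ∉ S) (h : UniqueFactorizationMonoid B) :
    UniqueFactorizationMonoid A := by
  apply UniqueFactorizationMonoid.of_exists_prime_factors
  intro a
  induction a using hwf.induction with
  | _ a ih =>
  intro ha
  by_cases hu : IsUnit a
  · exact ⟨0, by simp, by rw [Multiset.prod_zero]; exact (associated_one_iff_isUnit.mpr hu).symm⟩
  suffices hy : ∃ y : A, Prime y ∧ y ∣ a by
    obtain ⟨y, hyp, b, rfl⟩ := hy
    have hb0 : b ≠ 0 := fun h => ha (by rw [h, mul_zero])
    obtain ⟨f, hf, hfb⟩ := ih b ⟨hb0, y, hyp.not_unit, mul_comm y b⟩ hb0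
    refine ⟨y ::ₘ f, ?_, ?_⟩
    · intro q hq
      rcases Multiset.mem_cons.mp hq with rfl | hq
      · exact hyp
      · exact hf q hq
    · rw [Multiset.prod_cons]
      exact hfb.mul_left y
  by_cases hpa : ∃ p ∈ P, p ∣ a
  · obtain ⟨p, hp, hpd⟩ := hpa; exact ⟨p, hP p hp, hpd⟩
  push_neg at hpa
  have hmapa0 : algebraMap A B a ≠ 0 := fun hh => ha (loc_inj (S := S) (B := B) hS0 (by rw [hh, map_zero]))
  have hmapau : ¬ IsUnit (algebraMap A B a) := by
    intro hh
    obtain ⟨s, hs, hdvd⟩ := loc_unit_dvd hS0 hh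
    obtain ⟨p, hp, hpd⟩ := dvd_S_mem hP hu (hSP ▸ hs) hdvd
    exact hpa p hp hpd
  obtain ⟨g, hg, hga⟩ := UniqueFactorizationMonoid.exists_prime_factors (algebraMap A B a) hmapa0
  obtain ⟨q, hqg⟩ : ∃ q, q ∈ g := by
    refine Multiset.exists_mem_of_ne_zero (fun hg0 => hmapau ?_)
    rw [hg0, Multiset.prod_zero] at hga
    exact associated_one_iff_isUnit.mp hga.symm
  have hq := hg q hqg
  have hqa : q ∣ algebraMap A B a := (Multiset.dvd_prod hqg).trans hga.dvd
  set Y := {y : A | Associated (algebraMap A B y) q} with hY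
  have hYne : Y.Nonempty := loc_assoc (S := S) q
  obtain ⟨y, hyY, hymin⟩ : ∃ y, Associated (algebraMap A B y) q ∧
      ∀ y' ∈ Y, ¬ DvdNotUnit y' y :=
    ⟨hwf.min Y hYne, hwf.min_mem Y hYne, fun y' hy' => hwf.not_lt_min Y hy'⟩
  have hyT : ∀ p ∈ P, ¬ p ∣ y := by
    rintro p hp ⟨y', rfl⟩
    have hpu : IsUnit (algebraMap A B p) :=
      IsLocalization.map_units B ⟨p, hSP ▸ Submonoid.subset_closure hp⟩
    have hy'Y : Associated (algebraMap A B y') q := by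
      refine Associated.trans ?_ hyY
      rw [map_mul]
      exact ⟨hpu.unit, by rw [IsUnit.unit_spec]; ring⟩
    have hy'0 : y' ≠ 0 := by
      rintro rfl
      rw [map_zero] at hy'Y
      exact hq.ne_zero ((associated_zero_iff_eq_zero q).mp hy'Y.symm)
    exact hymin y' hy'Y ⟨hy'0, p, (hP p hp).not_unit, mul_comm p y'⟩
  have hyprime : Prime y := prime_pullback hP hSP hS0 hyT (hyY.symm.prime hq)
  obtain ⟨s, hs, c, hsc⟩ := loc_extract hS0 (hyY.dvd.trans hqa)
  exact ⟨y, hyprime, cancel_S hP hyT (hSP ▸ hs) a c hsc⟩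

end Main

/-- Nagata's theorem, UFD version: if `A` is a Krull domain and `S` is a multiplicative
set generated by prime elements, then `A` is a UFD iff `S⁻¹A` is a UFD. -/
theorem stmt5 {A : Type*} [CommRing A] [IsDomain A] (hA : IsKrullDomain A)
    (P : Set A) (hP : ∀ p ∈ P, Prime p)
    (S : Submonoid A) (hS : S = Submonoid.closure P) (hS0 : (0 : A) ∉ S)
    {B : Type*} [CommRing B] [IsDomain B] [Algebra A B] [IsLocalization S B] :
    UniqueFactorizationMonoid A ↔ UniqueFactorizationMonoid B :=
  ⟨fun h => ufd_to_loc hS0 h,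
   fun h => loc_to_ufd (wfDvd_of_krull hA) hP hS hS0 h⟩
end

section
/- A domain A is a unique factorization domain if and only if A is a Krull domain and its divisor class group C(A) is trivial. -/
open FractionalIdeal

section SetGcd

variable {α : Type*} [CommMonoidWithZero α] [GCDMonoid α] [WfDvdMonoid α]

/-- In a GCD monoid with ACCP, every set containing a nonzero element has a greatest
common divisor. -/
lemma exists_set_gcd (S : Set α) (b0 : α) (hb0 : b0 ∈ S) (hb0' : b0 ≠ 0) :
    ∃ g : α, g ≠ 0 ∧ (∀ b ∈ S, g ∣ b) ∧ ∀ d : α, (∀ b ∈ S, d ∣ b) → d ∣ g := by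
  obtain ⟨c, ⟨hc0, d, hd, hdc⟩, hmin⟩ := wellFounded_dvdNotUnit.has_min
    {c : α | c ≠ 0 ∧ ∃ d : α, (∀ b ∈ S, d ∣ b) ∧ d * c = b0}
    ⟨b0, hb0', 1, fun b _ => one_dvd b, one_mul b0⟩
  have hdne : d ≠ 0 := by rintro rfl; exact hb0' (by rw [← hdc, zero_mul])
  refine ⟨d, hdne, hd, fun q hq => ?_⟩
  have hl : ∀ b ∈ S, lcm q d ∣ b := fun b hb => lcm_dvd (hq b hb) (hd b hb)
  obtain ⟨c', hc'⟩ := hl b0 hb0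
  obtain ⟨e, he⟩ := dvd_lcm_right q d
  have hc'0 : c' ≠ 0 := by rintro rfl; exact hb0' (by rw [hc', mul_zero])
  have hce : c = e * c' := by
    apply mul_left_cancel₀ hdne
    rw [hdc, hc', he]; exact mul_assoc d e c'
  have hnd : ¬ DvdNotUnit c' c := hmin c' ⟨hc'0, lcm q d, hl, hc'.symm⟩
  have heu : IsUnit e := by
    by_contra h
    exact hnd ⟨hc'0, e, h, by rw [hce, mul_comm]⟩
  have hqde : q ∣ d * e := he ▸ dvd_lcm_left q d
  exact (IsUnit.dvd_mul_right heu).mp hqde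

end SetGcd

section Main

variable {A K : Type*} [CommRing A] [IsDomain A] [Field K] [Algebra A K] [IsFractionRing A K]

lemma stmt7_map_ne_zero {a : A} (ha : a ≠ 0) : algebraMap A K a ≠ 0 :=
  fun h => ha (IsFractionRing.injective A K (by rw [h, _root_.map_zero]))

/-- Comparison of principal fractional ideals with divisibility. -/
lemma stmt7_span_le_span_iff (a b : A) :
    spanSingleton (nonZeroDivisors A) (algebraMap A K a) ≤
      spanSingleton (nonZeroDivisors A) (algebraMap A K b) ↔ b ∣ a := by
  rw [← coeIdeal_span_singleton, ← coeIdeal_span_singleton,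
    coeIdeal_le_coeIdeal K, Ideal.span_singleton_le_span_singleton]

lemma stmt7_span_lt_span_iff (a b : A) :
    spanSingleton (nonZeroDivisors A) (algebraMap A K a) <
      spanSingleton (nonZeroDivisors A) (algebraMap A K b) ↔ DvdNotUnit b a := by
  rw [← coeIdeal_span_singleton, ← coeIdeal_span_singleton, lt_iff_le_not_ge,
    coeIdeal_le_coeIdeal K, coeIdeal_le_coeIdeal K, ← lt_iff_le_not_ge,
    Ideal.span_singleton_lt_span_singleton]

lemma stmt7_spanSingleton_divisorial (x : K) :
    1 / (1 / spanSingleton (nonZeroDivisors A) x) = spanSingleton (nonZeroDivisors A) x := by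
  rw [one_div_spanSingleton, one_div_spanSingleton, inv_inv]

lemma stmt7_one_div_le_one_div {I J : FractionalIdeal (nonZeroDivisors A) K}
    (hI : I ≠ 0) (h : I ≤ J) : 1 / J ≤ 1 / I := by
  have hJ : J ≠ 0 := fun hJ0 => hI (le_antisymm (hJ0 ▸ h) (zero_le I))
  rw [le_div_iff_of_ne_zero hI]
  intro x hx y hy
  rw [mem_div_iff_of_ne_zero hJ] at hx
  exact hx y (h hy)

lemma stmt7_le_one_div_one_div {I : FractionalIdeal (nonZeroDivisors A) K}
    (h1I : 1 / I ≠ 0) : I ≤ 1 / (1 / I) := by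
  rw [le_div_iff_of_ne_zero h1I]
  intro x hx y hy
  by_cases hI : I = 0
  · rw [hI] at hx
    rw [(mem_zero_iff _).mp hx, zero_mul]
    exact zero_mem (1 : FractionalIdeal (nonZeroDivisors A) K)
  · rw [mem_div_iff_of_ne_zero hI] at hy
    rw [mul_comm]
    exact hy x hx

section UFD

variable [UniqueFactorizationMonoid A]

/-- In a UFD, the dual `1/I` of any nonzero fractional ideal is principal. -/
lemma stmt7_one_div_principal (I : FractionalIdeal (nonZeroDivisors A) K) (hI : I ≠ 0) :
    ∃ g : K, g ≠ 0 ∧ 1 / I = spanSingleton (nonZeroDivisors A) g := by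
  classical
  letI gi : GCDMonoid A := UniqueFactorizationMonoid.toGCDMonoid A
  haveI : Nonempty (GCDMonoid A) := ⟨gi⟩
  have hinj : Function.Injective (algebraMap A K) := IsFractionRing.injective A K
  obtain ⟨a, haS, haI⟩ := I.isFractional
  have ha0 : a ≠ 0 := nonZeroDivisors.ne_zero haS
  have hφa : algebraMap A K a ≠ 0 := stmt7_map_ne_zero ha0
  set φ := algebraMap A K with hφ
  set T : Set A := {b : A | φ b / φ a ∈ I} with hT
  -- every element of I has the form φ b / φ a with b ∈ T
  have hTof : ∀ x ∈ I, ∃ b ∈ T, x = φ b / φ a := by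
    intro x hx
    obtain ⟨b, hb⟩ := haI x (mem_coe.mpr hx)
    have hxb : x = φ b / φ a := by
      rw [hb, Algebra.smul_def]
      field_simp
      rfl
    exact ⟨b, by rwa [hT, Set.mem_setOf_eq, ← hxb], hxb⟩
  -- a nonzero element of T
  obtain ⟨x0, hx0I, hx00⟩ : ∃ x ∈ I, x ≠ 0 := by
    by_contra h
    push_neg at h
    exact hI (eq_zero_iff.mpr h)
  obtain ⟨b0, hb0T, hb0x⟩ := hTof x0 hx0I
  have hb00 : b0 ≠ 0 := by
    rintro rfl
    exact hx00 (by rw [hb0x, _root_.map_zero, zero_div])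
  obtain ⟨g, hg0, hgdvd, hggr⟩ := exists_set_gcd T b0 hb0T hb00
  have hφg : φ g ≠ 0 := stmt7_map_ne_zero hg0
  refine ⟨φ a / φ g, div_ne_zero hφa hφg, le_antisymm ?_ ?_⟩
  · -- 1 / I ≤ span (φ a / φ g)
    intro x hx0
    have hx : x ∈ 1 / I := hx0
    show x ∈ spanSingleton (nonZeroDivisors A) (φ a / φ g)
    rw [mem_div_iff_of_ne_zero hI] at hx
    obtain ⟨⟨p, q⟩, hpq⟩ := IsLocalization.surj (nonZeroDivisors A) (x * φ g / φ a)
    obtain ⟨p', q', hp, hq, hcop⟩ := extract_gcd p (q : A)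
    have hrp : IsRelPrime p' q' := gcd_isUnit_iff_isRelPrime.mp hcop
    obtain ⟨e, hep, heq⟩ : ∃ e : A, p = e * p' ∧ (q : A) = e * q' := ⟨gcd p (q : A), hp, hq⟩
    clear hp hq
    have hq0 : (q : A) ≠ 0 := nonZeroDivisors.ne_zero q.2
    have he0 : e ≠ 0 := fun h => hq0 (by rw [heq, h, zero_mul])
    have hq'0 : q' ≠ 0 := fun h => hq0 (by rw [heq, h, mul_zero])
    have hφq' : φ q' ≠ 0 := stmt7_map_ne_zero hq'0
    have hpq' : x * φ g / φ a * φ (q : A) = φ p := hpq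
    have hy' : x * φ g / φ a * φ q' = φ p' := by
      apply mul_left_cancel₀ (stmt7_map_ne_zero he0)
      calc φ e * (x * φ g / φ a * φ q')
          = x * φ g / φ a * φ (e * q') := by rw [_root_.map_mul]; ring
        _ = φ p := by rw [← heq]; exact hpq'
        _ = φ e * φ p' := by rw [hep, _root_.map_mul]
    -- q' divides each cofactor of g
    have hq'c : ∀ b ∈ T, ∀ cb : A, b = g * cb → q' ∣ cb := by
      intro b hbT cb hcb
      have hxb := hx (φ b / φ a) hbT
      obtain ⟨t, ht⟩ := (mem_one_iff _).mp hxb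
      -- derive p' * b = t * (q' * g)
      have hkey : φ (p' * b) = φ (t * (q' * g)) := by
        simp only [_root_.map_mul]
        rw [ht, ← hy']
        field_simp
      have hAB : p' * b = t * (q' * g) := hinj hkey
      rw [hcb] at hAB
      have h3 : p' * cb = t * q' := mul_left_cancel₀ hg0 (by linear_combination hAB)
      have hdvd : q' ∣ p' * cb := ⟨t, by rw [h3]; ring⟩
      exact hrp.symm.dvd_of_dvd_mul_left hdvd
    have hgq' : ∀ b ∈ T, g * q' ∣ b := by
      intro b hbT
      obtain ⟨cb, hcb⟩ := hgdvd b hbT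
      obtain ⟨m, hm⟩ := hq'c b hbT cb hcb
      exact ⟨m, by rw [hcb, hm]; ring⟩
    have hq'1 : q' ∣ 1 :=
      (mul_dvd_mul_iff_left hg0).mp (by simpa [mul_one] using hggr (g * q') hgq')
    obtain ⟨u, hu⟩ := isUnit_of_dvd_one hq'1
    rw [mem_spanSingleton]
    refine ⟨↑u⁻¹ * p', ?_⟩
    have hyz : x * φ g / φ a = φ (↑u⁻¹ * p') := by
      apply mul_left_cancel₀ hφq'
      have huu : q' * ↑u⁻¹ = 1 := by rw [← hu]; exact u.mul_inv
      calc φ q' * (x * φ g / φ a) = x * φ g / φ a * φ q' := by ring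
        _ = φ p' := hy'
        _ = φ (q' * ↑u⁻¹ * p') := by rw [huu, one_mul]
        _ = φ q' * φ (↑u⁻¹ * p') := by simp only [_root_.map_mul, mul_assoc]
    rw [Algebra.smul_def, ← hyz]
    field_simp
  · -- span (φ a / φ g) ≤ 1 / I
    rw [spanSingleton_le_iff_mem, mem_div_iff_of_ne_zero hI]
    intro y hy
    obtain ⟨b, hbT, rfl⟩ := hTof y hy
    obtain ⟨m, hm⟩ := hgdvd b hbT
    have : φ a / φ g * (φ b / φ a) = φ m := by
      rw [hm, _root_.map_mul]
      field_simp
    rw [this]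
    exact coe_mem_one _ m

/-- In a UFD, every nonzero divisorial fractional ideal is principal (with nonzero generator). -/
lemma stmt7_divisorial_principal (I : FractionalIdeal (nonZeroDivisors A) K) (hI : I ≠ 0)
    (hdiv : 1 / (1 / I) = I) :
    ∃ g : K, g ≠ 0 ∧ I = spanSingleton (nonZeroDivisors A) g := by
  have h1I : 1 / I ≠ 0 := by
    intro h
    apply hI
    rw [← hdiv, h]
    exact FractionalIdeal.div_zero
  obtain ⟨g, hg, hspan⟩ := stmt7_one_div_principal (1 / I) h1I
  exact ⟨g, hg, by rw [← hdiv, hspan]⟩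

/-- A UFD is completely integrally closed. -/
lemma stmt7_cic (x : K)
    (hx : ∃ c : K, c ≠ 0 ∧ ∀ n : ℕ, c * x ^ n ∈ (algebraMap A K).range) :
    x ∈ (algebraMap A K).range := by
  classical
  letI gi : GCDMonoid A := UniqueFactorizationMonoid.toGCDMonoid A
  haveI : Nonempty (GCDMonoid A) := ⟨gi⟩
  have hinj : Function.Injective (algebraMap A K) := IsFractionRing.injective A K
  set φ := algebraMap A K with hφ
  obtain ⟨c, hc, hcx⟩ := hx
  obtain ⟨⟨c1, c2⟩, hc12⟩ := IsLocalization.surj (nonZeroDivisors A) c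
  simp only at hc12
  have hc20 : (c2 : A) ≠ 0 := nonZeroDivisors.ne_zero c2.2
  have hc10 : c1 ≠ 0 := by
    rintro rfl
    rw [_root_.map_zero] at hc12
    exact hc (by
      rcases mul_eq_zero.mp hc12 with h | h
      · exact h
      · exact absurd h (stmt7_map_ne_zero hc20))
  obtain ⟨⟨p, q⟩, hpq⟩ := IsLocalization.surj (nonZeroDivisors A) x
  obtain ⟨p', q', hp, hq, hcop⟩ := extract_gcd p (q : A)
  have hrp : IsRelPrime p' q' := gcd_isUnit_iff_isRelPrime.mp hcop
  obtain ⟨e, hep, heq⟩ : ∃ e : A, p = e * p' ∧ (q : A) = e * q' := ⟨gcd p (q : A), hp, hq⟩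
  clear hp hq
  have hq0 : (q : A) ≠ 0 := nonZeroDivisors.ne_zero q.2
  have he0 : e ≠ 0 := fun h => hq0 (by rw [heq, h, zero_mul])
  have hq'0 : q' ≠ 0 := fun h => hq0 (by rw [heq, h, mul_zero])
  have hpq' : x * φ (q : A) = φ p := hpq
  have hxq' : x * φ q' = φ p' := by
    apply mul_left_cancel₀ (stmt7_map_ne_zero he0)
    calc φ e * (x * φ q') = x * (φ e * φ q') := by ring
    _ = x * φ (q : A) := by rw [← _root_.map_mul, ← heq]
    _ = φ p := hpq'
    _ = φ e * φ p' := by rw [hep, _root_.map_mul]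
  by_cases hq'u : IsUnit q'
  · obtain ⟨u, hu⟩ := hq'u
    refine ⟨↑u⁻¹ * p', ?_⟩
    have huu : q' * ↑u⁻¹ = 1 := by rw [← hu]; exact u.mul_inv
    apply mul_left_cancel₀ (stmt7_map_ne_zero hq'0)
    calc φ q' * φ (↑u⁻¹ * p') = φ (q' * ↑u⁻¹ * p') := by simp only [_root_.map_mul, mul_assoc]
    _ = φ p' := by rw [huu, one_mul]
    _ = x * φ q' := hxq'.symm
    _ = φ q' * x := by ring
  · -- q'^n divides c1 for all n, contradiction
    exfalso
    have hdvd : ∀ n : ℕ, q' ^ n ∣ c1 := by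
      intro n
      obtain ⟨d, hd⟩ := hcx n
      have hkey : φ (c1 * p' ^ n) = φ (d * c2 * q' ^ n) := by
        rw [_root_.map_mul, _root_.map_mul, _root_.map_mul, _root_.map_pow, _root_.map_pow, ← hxq', ← hc12, hd]
        ring
      have h1 : c1 * p' ^ n = d * c2 * q' ^ n := hinj hkey
      have h2 : q' ^ n ∣ c1 * p' ^ n := ⟨d * c2, by rw [h1]; ring⟩
      exact (hrp.symm.pow (m := n) (n := n)).dvd_of_dvd_mul_right h2
    obtain ⟨n, r, hr, hc1r⟩ := WfDvdMonoid.max_power_factor' hc10 hq'u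
    obtain ⟨s, hs⟩ := hdvd (n + 1)
    apply hr
    have hq'n : q' ^ n ≠ 0 := pow_ne_zero n hq'0
    refine ⟨s, mul_left_cancel₀ hq'n ?_⟩
    rw [← hc1r, hs]
    ring

end UFD

end Main

/-- A domain is a UFD iff it is a Krull domain with trivial divisor class group,
i.e. every nonzero divisorial fractional ideal (`(I⁻¹)⁻¹ = I`) is principal. -/
theorem stmt7 {A K : Type*} [CommRing A] [IsDomain A] [Field K] [Algebra A K]
    [IsFractionRing A K] :
    UniqueFactorizationMonoid A ↔
      (IsKrullDomain A ∧
        ∀ I : FractionalIdeal (nonZeroDivisors A) K, I ≠ 0 → 1 / (1 / I) = I →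
          ∃ x : K, I = FractionalIdeal.spanSingleton (nonZeroDivisors A) x) := by
  constructor
  · intro hufm
    refine ⟨⟨fun x hx => stmt7_cic x hx, ?_⟩, fun I hI hdiv => ?_⟩
    · -- ACC on divisorial ideals
      have hprin : ∀ I : {I : FractionalIdeal (nonZeroDivisors A) (FractionRing A) //
          I ≠ 0 ∧ I ≤ 1 ∧ 1 / (1 / I) = I},
          ∃ a : A, a ≠ 0 ∧ (I : FractionalIdeal (nonZeroDivisors A) (FractionRing A)) =
            spanSingleton (nonZeroDivisors A) (algebraMap A (FractionRing A) a) := by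
        rintro ⟨I, hI0, hI1, hIdiv⟩
        obtain ⟨g, hg, hspan⟩ := stmt7_divisorial_principal I hI0 hIdiv
        have hgmem : g ∈ I := by rw [hspan]; exact mem_spanSingleton_self _ _
        obtain ⟨a, ha⟩ := (mem_one_iff _).mp (hI1 hgmem)
        refine ⟨a, ?_, ?_⟩
        · rintro rfl
          rw [_root_.map_zero] at ha
          exact hg ha.symm
        · show I = spanSingleton (nonZeroDivisors A) (algebraMap A (FractionRing A) a)
          rw [hspan, ← ha]
      choose f hf0 hfspan using hprin
      refine ⟨Subrelation.wf ?_ (InvImage.wf f wellFounded_dvdNotUnit)⟩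
      rintro I J h
      show DvdNotUnit (f I) (f J)
      have hlt : (J : FractionalIdeal (nonZeroDivisors A) (FractionRing A)) < I := h
      rw [hfspan I, hfspan J] at hlt
      exact (stmt7_span_lt_span_iff (f J) (f I)).mp hlt
    · -- every divisorial ideal is principal
      obtain ⟨g, _, hspan⟩ := stmt7_divisorial_principal I hI hdiv
      exact ⟨g, hspan⟩
  · rintro ⟨⟨_, hwf⟩, hP⟩
    classical
    haveI hwfd : WfDvdMonoid A := by
      set F : {a : A // a ≠ 0} → {I : FractionalIdeal (nonZeroDivisors A) (FractionRing A) //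
          I ≠ 0 ∧ I ≤ 1 ∧ 1 / (1 / I) = I} := fun a =>
        ⟨spanSingleton (nonZeroDivisors A) (algebraMap A (FractionRing A) a.1),
          spanSingleton_ne_zero_iff.mpr (stmt7_map_ne_zero a.2),
          spanSingleton_le_iff_mem.mpr (coe_mem_one _ _),
          stmt7_spanSingleton_divisorial _⟩ with hF
      have hw : WellFounded (fun x y : {a : A // a ≠ 0} => DvdNotUnit x.1 y.1) := by
        refine Subrelation.wf ?_ (InvImage.wf F hwf.wf)
        rintro x y hxy
        show F y < F x
        show (F y : FractionalIdeal (nonZeroDivisors A) (FractionRing A)) < F x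
        exact (stmt7_span_lt_span_iff y.1 x.1).mpr hxy
      have key : ∀ x : {a : A // a ≠ 0}, Acc (DvdNotUnit (α := A)) x.1 :=
        fun x => hw.induction (C := fun x => Acc (DvdNotUnit (α := A)) x.1) x
          (fun x ih => ⟨x.1, fun b hb => ih ⟨b, hb.1⟩ hb⟩)
      refine ⟨⟨fun a => ?_⟩⟩
      by_cases ha : a = 0
      · subst ha
        exact ⟨0, fun b hb => key ⟨b, hb.1⟩⟩
      · exact key ⟨a, ha⟩
    have hgcd : ∀ a b : A, ∃ c : A, ∀ d : A, d ∣ a ∧ d ∣ b ↔ d ∣ c := by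
      intro a b
      by_cases ha : a = 0
      · exact ⟨b, fun d => by subst ha; simp⟩
      by_cases hb : b = 0
      · exact ⟨a, fun d => by subst hb; simp⟩
      set φ := algebraMap A K with hφ
      set I : FractionalIdeal (nonZeroDivisors A) K := ((Ideal.span {a, b} : Ideal A) :
        FractionalIdeal (nonZeroDivisors A) K) with hIdef
      have haI : φ a ∈ I := mem_coeIdeal_of_mem _ (Ideal.subset_span (by simp))
      have hbI : φ b ∈ I := mem_coeIdeal_of_mem _ (Ideal.subset_span (by simp))
      have hI0 : I ≠ 0 := by
        intro h
        rw [h] at haI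
        exact stmt7_map_ne_zero ha ((mem_zero_iff _).mp haI)
      have hIle : I ≤ 1 := coeIdeal_le_one
      set D : FractionalIdeal (nonZeroDivisors A) K := 1 / I with hDdef
      have h1D : (1 : K) ∈ D := by
        rw [hDdef, mem_div_iff_of_ne_zero hI0]
        intro y hy
        rw [one_mul]
        exact hIle hy
      have hD0 : D ≠ 0 := by
        intro h
        rw [h] at h1D
        exact one_ne_zero ((mem_zero_iff _).mp h1D)
      have hIleDD : I ≤ 1 / (1 / I) := stmt7_le_one_div_one_div hD0
      have hE0 : 1 / D ≠ 0 := by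
        intro h
        rw [hDdef] at h
        rw [h] at hIleDD
        exact hI0 (le_antisymm hIleDD (zero_le I))
      have hDdiv : 1 / (1 / D) = D := by
        apply le_antisymm
        · exact stmt7_one_div_le_one_div hI0 hIleDD
        · exact stmt7_le_one_div_one_div hE0
      obtain ⟨x, hx⟩ := hP D hD0 hDdiv
      have hx0 : x ≠ 0 := by
        rintro rfl
        rw [spanSingleton_zero] at hx
        exact hD0 hx
      have hDdual : 1 / D = spanSingleton (nonZeroDivisors A) x⁻¹ := by
        rw [hx, one_div_spanSingleton]
      have h1leD : (1 : FractionalIdeal (nonZeroDivisors A) K) ≤ D := by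
        rw [hDdef, le_div_iff_of_ne_zero hI0]
        intro y hy z hz
        obtain ⟨u, hu⟩ := (mem_one_iff _).mp hy
        obtain ⟨v, hv⟩ := (mem_one_iff _).mp (hIle hz)
        rw [← hu, ← hv, ← _root_.map_mul]
        exact coe_mem_one _ _
      have hinvle : spanSingleton (nonZeroDivisors A) x⁻¹ ≤ 1 := by
        rw [← hDdual]
        have h' := stmt7_one_div_le_one_div (I := (1 : FractionalIdeal (nonZeroDivisors A) K))
          one_ne_zero h1leD
        rwa [FractionalIdeal.div_one] at h'
      obtain ⟨c, hc⟩ := (mem_one_iff _).mp (hinvle (mem_spanSingleton_self _ _))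
      refine ⟨c, fun d => ⟨?_, ?_⟩⟩
      · rintro ⟨hda, hdb⟩
        have hd0 : d ≠ 0 := by rintro rfl; exact ha (zero_dvd_iff.mp hda)
        have hspan : I ≤ spanSingleton (nonZeroDivisors A) (φ d) := by
          rw [hIdef, ← coeIdeal_span_singleton, coeIdeal_le_coeIdeal K]
          rw [Ideal.span_le]
          rintro z hz
          simp only [Set.mem_insert_iff, Set.mem_singleton_iff] at hz
          rcases hz with rfl | rfl
          · exact Ideal.mem_span_singleton.mpr hda
          · exact Ideal.mem_span_singleton.mpr hdb
        have hsd0 : spanSingleton (nonZeroDivisors A) (φ d) ≠ 0 :=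
          spanSingleton_ne_zero_iff.mpr (stmt7_map_ne_zero hd0)
        have hsd0' : 1 / spanSingleton (nonZeroDivisors A) (φ d) ≠ 0 := by
          rw [one_div_spanSingleton]
          exact spanSingleton_ne_zero_iff.mpr (inv_ne_zero (stmt7_map_ne_zero hd0))
        have h1 : 1 / spanSingleton (nonZeroDivisors A) (φ d) ≤ 1 / I :=
          stmt7_one_div_le_one_div hI0 hspan
        have h2 : 1 / (1 / I) ≤ 1 / (1 / spanSingleton (nonZeroDivisors A) (φ d)) :=
          stmt7_one_div_le_one_div hsd0' h1
        rw [stmt7_spanSingleton_divisorial] at h2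
        rw [show (1 / I : FractionalIdeal (nonZeroDivisors A) K) = D from rfl] at h2
        rw [hDdual] at h2
        have hmem : x⁻¹ ∈ spanSingleton (nonZeroDivisors A) (φ d) :=
          h2 (mem_spanSingleton_self _ _)
        rw [← hc] at hmem
        obtain ⟨z, hz⟩ := (mem_spanSingleton _).mp hmem
        refine ⟨z, IsFractionRing.injective A K ?_⟩
        rw [_root_.map_mul, ← hz, Algebra.smul_def]
        ring
      · intro hdc
        obtain ⟨m, hm⟩ := hdc
        have hcd : spanSingleton (nonZeroDivisors A) x⁻¹ ≤
            spanSingleton (nonZeroDivisors A) (φ d) := by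
          rw [spanSingleton_le_iff_mem, ← hc, mem_spanSingleton]
          exact ⟨m, by rw [Algebra.smul_def, ← _root_.map_mul, hm, mul_comm]⟩
        have hIle2 : I ≤ spanSingleton (nonZeroDivisors A) x⁻¹ := by
          rw [← hDdual]
          exact hIleDD
        constructor
        · obtain ⟨z, hz⟩ := (mem_spanSingleton _).mp (hcd (hIle2 haI))
          exact ⟨z, IsFractionRing.injective A K (by rw [_root_.map_mul, ← hz, Algebra.smul_def]; ring)⟩
        · obtain ⟨z, hz⟩ := (mem_spanSingleton _).mp (hcd (hIle2 hbI))
          exact ⟨z, IsFractionRing.injective A K (by rw [_root_.map_mul, ← hz, Algebra.smul_def]; ring)⟩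
    letI : GCDMonoid A := gcdMonoidOfExistsGCD hgcd
    exact ufm_of_decomposition_of_wfDvdMonoid
end

section
/- Consider the ℚ-algebra A = ℚ[X_1, X_1', X_2, X_2'] / ⟨X_1 X_1' - (1 + X_2), X_2 X_2' - (1 + X_1^n)⟩ for n ≥ 1 (the rank-2 acyclic cluster algebra with exchange matrix B = [[0, n], [-1, 0]] and no frozen variables). If n is a power of 2, then A is a unique factorization domain. -/
/-!
Eliminating `x₂ = x₁x₁' - 1` presents the cluster algebra as `R[θ]/(aθ - b)` with
`R = ℚ[x₁, x₁']`, `a = x₁x₁' - 1`, `b = x₁ⁿ + 1` and `θ = x₂'`. Since `a` and `b` are coprime in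
the UFD `R`, the linear polynomial `aθ - b` is prime, so this ring is a domain. Inverting `a` turns
it into `R[1/a]`, a UFD, while modulo `a` it becomes `(R/(a, b))[θ]` with
`R/(a, b) ≅ ℚ[x]/(xⁿ + 1)`, a field when `xⁿ + 1` is irreducible; then `a` is prime, and Nagata's
criterion (a Noetherian domain which becomes a UFD after inverting a prime is a UFD) applies.
For `n = 2ᵏ`, `xⁿ + 1` is the cyclotomic polynomial `Φ_{2n}`, irreducible over `ℚ`.
-/

/-- The rank-2 acyclic cluster algebra over `ℚ` with exchange matrix `[[0,n],[-1,0]]`,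
in its Berenstein–Fomin–Zelevinsky presentation
`ℚ[X₁,X₁',X₂,X₂']/⟨X₁X₁' - (1+X₂), X₂X₂' - (1+X₁ⁿ)⟩`. -/
noncomputable abbrev clusterAlgRank2 (n : ℕ) : Type :=
  MvPolynomial (Fin 4) ℚ ⧸ Ideal.span
    {(MvPolynomial.X 0 * MvPolynomial.X 1 - (1 + MvPolynomial.X 2) : MvPolynomial (Fin 4) ℚ),
      MvPolynomial.X 2 * MvPolynomial.X 3 - (1 + MvPolynomial.X 0 ^ n)}

open Polynomial

theorem Polynomial.IsPrimitive.isRelPrime_C {R : Type*} [CommRing R] [IsDomain R] {p : R[X]}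
    (hp : p.IsPrimitive) {r : R} (hr : r ≠ 0) : IsRelPrime p (C r) := by
  intro d _ hdr
  obtain ⟨d₀, rfl⟩ : ∃ d₀, C d₀ = d := natDegree_eq_zero.1 <|
    Nat.le_zero.1 <| (natDegree_le_of_dvd hdr (C_ne_zero.2 hr)).trans_eq (natDegree_C r)
  exact isUnit_C.2 (hp d₀ ‹_›)

namespace Ideal.Quotient

variable {R : Type*} [CommRing R] (a b : R)

theorem mk_span_pair_left : mk (Ideal.span {a, b}) a = 0 :=
  eq_zero_iff_mem.2 (Ideal.subset_span (by simp))

theorem mk_span_pair_right : mk (Ideal.span {a, b}) b = 0 :=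
  eq_zero_iff_mem.2 (Ideal.subset_span (by simp))

end Ideal.Quotient

namespace AdjoinRoot

variable {R : Type*} [CommRing R] (a b : R)

theorem of_mul_root_linear :
    of (C a * X - C b) a * root (C a * X - C b) = of (C a * X - C b) b := by
  have := mk_self (f := C a * X - C b)
  rwa [map_sub, map_mul, mk_C, mk_C, mk_X, sub_eq_zero] at this

noncomputable def toAway : AdjoinRoot (C a * X - C b) →+* Localization.Away a :=
  lift (algebraMap R _) (algebraMap R _ b * IsLocalization.Away.invSelf a) (by
    simp [mul_left_comm _ (algebraMap R _ b)])

noncomputable def awayToAwayOf :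
    Localization.Away a →+* Localization.Away (of (C a * X - C b) a) :=
  Localization.awayLift ((algebraMap _ _).comp (of (C a * X - C b))) a
    (IsLocalization.Away.algebraMap_isUnit (of (C a * X - C b) a))

theorem awayToAwayOf_algebraMap (r : R) :
    awayToAwayOf a b (algebraMap R _ r) = algebraMap _ _ (of (C a * X - C b) r) := by
  simp [awayToAwayOf]

/-- Once `a` is inverted, the relation `a θ = b` solves for `θ = b / a`. -/
noncomputable def awayOfEquivAway :
    Localization.Away (of (C a * X - C b) a) ≃+* Localization.Away a :=
  RingEquiv.ofRingHom
    (Localization.awayLift (toAway a b) _ (by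
      simpa [toAway] using IsLocalization.Away.algebraMap_isUnit a))
    (awayToAwayOf a b)
    (IsLocalization.ringHom_ext (Submonoid.powers a) (S := Localization.Away a)
      (RingHom.ext fun r ↦ by simp [awayToAwayOf_algebraMap, toAway]))
    (by
      refine IsLocalization.ringHom_ext (Submonoid.powers (of (C a * X - C b) a))
        (ringHom_ext (RingHom.ext fun r ↦ by simp [awayToAwayOf_algebraMap, toAway]) ?_)
      have hinv := congrArg (awayToAwayOf a b)
        (IsLocalization.Away.mul_invSelf (S := Localization.Away a) a)
      rw [map_mul, map_one, awayToAwayOf_algebraMap] at hinv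
      simp [toAway, awayToAwayOf_algebraMap, ← of_mul_root_linear, mul_right_comm, hinv])

noncomputable def quotientSpanOfToPolynomial :
    AdjoinRoot (C a * X - C b) ⧸ Ideal.span {of (C a * X - C b) a} →+*
      (R ⧸ Ideal.span {a, b})[X] :=
  Ideal.Quotient.lift _
    (lift (C.comp (Ideal.Quotient.mk _)) X (by
      simp [Ideal.Quotient.mk_span_pair_left, Ideal.Quotient.mk_span_pair_right]))
    (fun d hd ↦ by
      obtain ⟨e, rfl⟩ := Ideal.mem_span_singleton'.1 hd
      simp [Ideal.Quotient.mk_span_pair_left])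

theorem span_le_ker_mk_comp_of : Ideal.span {a, b} ≤
    RingHom.ker ((Ideal.Quotient.mk (Ideal.span {of (C a * X - C b) a})).comp (of _)) := by
  rw [Ideal.span_le]
  rintro _ (rfl | rfl)
  · simp
  · simp [← of_mul_root_linear]

noncomputable def polynomialToQuotientSpanOf :
    (R ⧸ Ideal.span {a, b})[X] →+*
      AdjoinRoot (C a * X - C b) ⧸ Ideal.span {of (C a * X - C b) a} :=
  eval₂RingHom
    (Ideal.Quotient.lift _ _ fun _ hr ↦ RingHom.mem_ker.1 (span_le_ker_mk_comp_of a b hr))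
    (Ideal.Quotient.mk _ (root _))

theorem quotientSpanOfToPolynomial_injective :
    Function.Injective (quotientSpanOfToPolynomial a b) := by
  refine Function.LeftInverse.injective (g := polynomialToQuotientSpanOf a b) fun d ↦ ?_
  refine RingHom.congr_fun (g := RingHom.id _)
    (f := (polynomialToQuotientSpanOf a b).comp (quotientSpanOfToPolynomial a b)) ?_ d
  refine Ideal.Quotient.ringHom_ext (ringHom_ext (RingHom.ext fun r ↦ ?_) ?_) <;>
    simp [quotientSpanOfToPolynomial, polynomialToQuotientSpanOf]

variable {a b} [IsDomain R]

theorem prime_of_isPrime_span_pair (ha : a ≠ 0) (hI : (Ideal.span {a, b}).IsPrime) :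
    Prime (of (C a * X - C b) a) := by
  have hdeg : (C a * X - C b).degree = 1 := by compute_degree!
  have hne : of (C a * X - C b) a ≠ 0 :=
    (map_ne_zero_iff _ (of.injective_of_degree_ne_zero (by simp [hdeg]))).2 ha
  rw [← Ideal.span_singleton_prime hne, ← Ideal.Quotient.isDomain_iff_prime]
  exact (quotientSpanOfToPolynomial_injective a b).isDomain

theorem isDomain_of_isRelPrime [UniqueFactorizationMonoid R] (ha : a ≠ 0)
    (hab : IsRelPrime a b) : IsDomain (AdjoinRoot (C a * X - C b)) := by
  refine isDomain_of_prime (Irreducible.prime ?_)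
  rw [sub_eq_add_neg, ← C_neg]
  exact irreducible_C_mul_X_add_C ha hab.neg_right

theorem uniqueFactorizationMonoid_of_isRelPrime [UniqueFactorizationMonoid R]
    [IsNoetherianRing R] (hab : IsRelPrime a b) (hI : (Ideal.span {a, b}).IsPrime) :
    ∃ _ : IsDomain (AdjoinRoot (C a * X - C b)),
      UniqueFactorizationMonoid (AdjoinRoot (C a * X - C b)) := by
  have ha : a ≠ 0 := by
    rintro rfl
    exact hI.ne_top (Ideal.eq_top_of_isUnit_mem _ (Ideal.subset_span (by simp))
      (isRelPrime_zero_left.1 hab))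
  have := isDomain_of_isRelPrime ha hab
  have : IsDomain (Localization.Away a) := IsLocalization.Away.isDomain _ ha
  refine ⟨inferInstance, ?_⟩
  rw [UniqueFactorizationMonoid.iff_localizationAway_of_prime (prime_of_isPrime_span_pair ha hI)]
  exact (awayOfEquivAway a b).symm.toMulEquiv.uniqueFactorizationMonoid inferInstance

end AdjoinRoot

namespace Polynomial

theorem irreducible_X_pow_two_pow_add_one (k : ℕ) : Irreducible (X ^ 2 ^ k + 1 : ℚ[X]) := by
  have h := cyclotomic.irreducible_rat (n := 2 ^ (k + 1)) (by positivity)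
  rwa [cyclotomic_prime_pow_eq_geom_sum Nat.prime_two, Finset.sum_range_succ,
    Finset.sum_range_one, pow_zero, pow_one, add_comm] at h

theorem ne_zero_of_irreducible_X_pow_add_one {n : ℕ} (h : Irreducible (X ^ n + 1 : ℚ[X])) :
    n ≠ 0 := by
  rintro rfl
  refine h.not_isUnit ?_
  rw [pow_zero, ← C_1, ← C_add]
  exact isUnit_C.2 (by norm_num)

end Polynomial

namespace clusterAlgRank2

variable (n : ℕ)

theorem isPrimitive_exchange : (C X * X - 1 : ℚ[X][X]).IsPrimitive := fun r hr ↦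
  isUnit_of_dvd_one (by simpa using (C_dvd_iff_dvd_coeff r _).1 hr 0)

theorem isRelPrime_exchange : IsRelPrime (C X * X - 1 : ℚ[X][X]) (C (X ^ n + 1)) :=
  isPrimitive_exchange.isRelPrime_C fun h ↦ by simpa using congrArg (eval 1) h

noncomputable abbrev exchangeIdeal : Ideal ℚ[X][X] := Ideal.span {C X * X - 1, C (X ^ n + 1)}

theorem mk_C_X_mul_mk_X :
    Ideal.Quotient.mk (exchangeIdeal n) (C X) * Ideal.Quotient.mk (exchangeIdeal n) X = 1 := by
  rw [← map_mul, ← map_one (Ideal.Quotient.mk _), Ideal.Quotient.mk_eq_mk_iff_sub_mem]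
  exact Ideal.subset_span (by simp)

section IsPrimeExchangeIdeal

variable [Fact (Irreducible (X ^ n + 1 : ℚ[X]))]

theorem root_X_pow_add_one_ne_zero : AdjoinRoot.root (X ^ n + 1 : ℚ[X]) ≠ 0 := by
  intro h0
  have := AdjoinRoot.mk_self (f := (X ^ n + 1 : ℚ[X]))
  rw [map_add, map_pow, AdjoinRoot.mk_X, h0, map_one,
    zero_pow (ne_zero_of_irreducible_X_pow_add_one Fact.out)] at this
  simp at this

theorem exchangeIdeal_le_ker : exchangeIdeal n ≤
    RingHom.ker (eval₂RingHom (AdjoinRoot.mk (X ^ n + 1 : ℚ[X])) (AdjoinRoot.root _)⁻¹) := by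
  rw [Ideal.span_le]
  rintro _ (rfl | rfl)
  · simp [mul_inv_cancel₀ (root_X_pow_add_one_ne_zero n)]
  · rw [SetLike.mem_coe, RingHom.mem_ker, coe_eval₂RingHom, eval₂_C, AdjoinRoot.mk_self]

noncomputable def quotientExchangeToAdjoinRoot :
    ℚ[X][X] ⧸ exchangeIdeal n →+* AdjoinRoot (X ^ n + 1 : ℚ[X]) :=
  Ideal.Quotient.lift _ _ fun _ hr ↦ RingHom.mem_ker.1 (exchangeIdeal_le_ker n hr)

noncomputable def adjoinRootToQuotientExchange :
    AdjoinRoot (X ^ n + 1 : ℚ[X]) →+* ℚ[X][X] ⧸ exchangeIdeal n :=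
  AdjoinRoot.lift (algebraMap ℚ _) (Ideal.Quotient.mk (exchangeIdeal n) (C X)) (by
    simpa using Ideal.Quotient.eq_zero_iff_mem.2
      (Ideal.subset_span (by simp) : C (X ^ n + 1) ∈ exchangeIdeal n))

theorem quotientExchangeToAdjoinRoot_injective :
    Function.Injective (quotientExchangeToAdjoinRoot n) := by
  refine Function.LeftInverse.injective (g := adjoinRootToQuotientExchange n) fun d ↦ ?_
  refine RingHom.congr_fun (g := RingHom.id _)
    (f := (adjoinRootToQuotientExchange n).comp (quotientExchangeToAdjoinRoot n)) ?_ d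
  refine Ideal.Quotient.ringHom_ext (ringHom_ext' (ringHom_ext' (RingHom.ext_rat _ _) ?_) ?_)
  · simp [quotientExchangeToAdjoinRoot, adjoinRootToQuotientExchange]
  · have hroot : adjoinRootToQuotientExchange n (AdjoinRoot.root _) =
        Ideal.Quotient.mk (exchangeIdeal n) (C X) := AdjoinRoot.lift_root _
    have hinv := congrArg (adjoinRootToQuotientExchange n)
      (inv_mul_cancel₀ (root_X_pow_add_one_ne_zero n))
    rw [map_mul, map_one, hroot] at hinv
    simp only [quotientExchangeToAdjoinRoot, RingHom.comp_apply, Ideal.Quotient.lift_mk,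
      coe_eval₂RingHom, eval₂_X, RingHom.id_apply]
    exact left_inv_eq_right_inv hinv (mk_C_X_mul_mk_X n)

theorem isPrime_exchangeIdeal : (exchangeIdeal n).IsPrime := by
  rw [← Ideal.Quotient.isDomain_iff_prime]
  exact (quotientExchangeToAdjoinRoot_injective n).isDomain

end IsPrimeExchangeIdeal

/-- `ℚ[x₁, x₁'][x₂'] / (x₂ x₂' - (x₁ⁿ + 1))` with `x₂ = x₁ x₁' - 1`, where `x₁ = C X` and
`x₁' = X` in `ℚ[X][X]`, and `x₂'` is the adjoined root. -/
noncomputable abbrev LinearPresentation : Type :=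
  AdjoinRoot (C (C X * X - 1) * X - C (C (X ^ n + 1)) : ℚ[X][X][X])

theorem mk_X_zero_mul_mk_X_one :
    (Ideal.Quotient.mk _ (MvPolynomial.X 0) * Ideal.Quotient.mk _ (MvPolynomial.X 1) :
      clusterAlgRank2 n) = 1 + Ideal.Quotient.mk _ (MvPolynomial.X 2) := by
  rw [← map_mul, ← map_one (Ideal.Quotient.mk _), ← map_add, Ideal.Quotient.mk_eq_mk_iff_sub_mem]
  exact Ideal.subset_span (by simp)

theorem mk_X_two_mul_mk_X_three :
    (Ideal.Quotient.mk _ (MvPolynomial.X 2) * Ideal.Quotient.mk _ (MvPolynomial.X 3) :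
      clusterAlgRank2 n) = 1 + Ideal.Quotient.mk _ (MvPolynomial.X 0) ^ n := by
  rw [← map_mul, ← map_one (Ideal.Quotient.mk _), ← map_pow, ← map_add,
    Ideal.Quotient.mk_eq_mk_iff_sub_mem]
  exact Ideal.subset_span (by simp)

open AdjoinRoot in
noncomputable def toLinearPresentation : clusterAlgRank2 n →+* LinearPresentation n :=
  Ideal.Quotient.lift _ (MvPolynomial.aeval
    (![of _ (C X), of _ X, of _ (C X * X - 1), root _] : Fin 4 → LinearPresentation n)).toRingHom
    fun _ hr ↦ by
      refine RingHom.mem_ker.1 (Ideal.span_le.2 ?_ hr : _ ∈ RingHom.ker _)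
      rintro _ (rfl | rfl)
      · simp
      · have := of_mul_root_linear (C X * X - 1 : ℚ[X][X]) (C (X ^ n + 1))
        simp only [map_sub, map_mul, map_add, map_one, map_pow] at this
        simp only [SetLike.mem_coe, RingHom.mem_ker, AlgHom.toRingHom_eq_coe, RingHom.coe_coe,
          map_sub, map_mul, map_add, map_one, map_pow, MvPolynomial.aeval_X, Matrix.cons_val]
        linear_combination this

noncomputable def ofLinearPresentation : LinearPresentation n →ₐ[ℚ] clusterAlgRank2 n :=
  AdjoinRoot.liftAlgHom _
    (aevalTower (aeval (Ideal.Quotient.mk _ (MvPolynomial.X 0)))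
      (Ideal.Quotient.mk _ (MvPolynomial.X 1)))
    (Ideal.Quotient.mk _ (MvPolynomial.X 3)) (by
      simp only [map_sub, map_mul, map_one, map_add, map_pow, eval₂_sub, eval₂_mul, eval₂_add,
        eval₂_pow, eval₂_one, eval₂_C, eval₂_X, RingHom.coe_coe, aevalTower_C, aevalTower_X, aeval_X]
      linear_combination Ideal.Quotient.mk _ (MvPolynomial.X 3) * mk_X_zero_mul_mk_X_one n +
        mk_X_two_mul_mk_X_three n)

noncomputable def linearPresentationEquiv : clusterAlgRank2 n ≃+* LinearPresentation n := by
  refine RingEquiv.ofRingHom (toLinearPresentation n) (ofLinearPresentation n)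
    (AdjoinRoot.ringHom_ext (ringHom_ext' (ringHom_ext' (RingHom.ext_rat _ _) ?_) ?_) ?_)
    (Ideal.Quotient.ringHom_ext (MvPolynomial.ringHom_ext' (RingHom.ext_rat _ _) fun i ↦ ?_))
  · simp [toLinearPresentation, ofLinearPresentation]
  · simp [toLinearPresentation, ofLinearPresentation]
  · simp [toLinearPresentation, ofLinearPresentation]
  · fin_cases i <;> simp [toLinearPresentation, ofLinearPresentation, mk_X_zero_mul_mk_X_one]

theorem uniqueFactorizationMonoid_of_irreducible (h : Irreducible (X ^ n + 1 : ℚ[X])) :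
    ∃ _ : IsDomain (clusterAlgRank2 n), UniqueFactorizationMonoid (clusterAlgRank2 n) := by
  have := Fact.mk h
  obtain ⟨_, hufd⟩ := AdjoinRoot.uniqueFactorizationMonoid_of_isRelPrime
    (isRelPrime_exchange n) (isPrime_exchangeIdeal n)
  let e := linearPresentationEquiv n
  exact ⟨e.injective.isDomain, e.symm.toMulEquiv.uniqueFactorizationMonoid hufd⟩

end clusterAlgRank2

theorem stmt12_general (n : ℕ) (hn : ∃ k : ℕ, n = 2 ^ k) :
    ∃ _ : IsDomain (clusterAlgRank2 n), UniqueFactorizationMonoid (clusterAlgRank2 n) := by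
  obtain ⟨k, rfl⟩ := hn
  exact clusterAlgRank2.uniqueFactorizationMonoid_of_irreducible _
    (irreducible_X_pow_two_pow_add_one k)

/-- If `n` is a power of `2`, the rank-2 cluster algebra with exchange matrix
`[[0,n],[-1,0]]` over `ℚ` is a unique factorization domain. -/
theorem stmt12 (n : ℕ) (hn1 : 1 ≤ n) (hn : ∃ k : ℕ, n = 2 ^ k) :
    ∃ _ : IsDomain (clusterAlgRank2 n), UniqueFactorizationMonoid (clusterAlgRank2 n) :=
  stmt12_general n hn
end

section
/- Let A = ℚ[X_1, X_1', X_2, X_2', X_3, X_3']/⟨X_1X_1' - (X_2+1), X_2X_2' - (1 + X_1X_3), X_3X_3' - (X_2+1)⟩ (the cluster algebra of Dynkin type A_3 with linear quiver 1 → 2 ← 3). Then the ideal generated by X_1 and X_3 in A is a prime ideal, with quotient A/⟨X_1, X_3⟩ isomorphic to a polynomial ring ℚ[X_1', X_3']. -/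
/-- The defining ideal of the type `A₃` cluster algebra (quiver `1 → 2 ← 3`) in its
Berenstein–Fomin–Zelevinsky presentation: variables `X₁,X₁',X₂,X₂',X₃,X₃'` are
indexed `0,1,2,3,4,5`, with relations `X₁X₁' = X₂+1`, `X₂X₂' = 1+X₁X₃`,
`X₃X₃' = X₂+1`. -/
noncomputable abbrev a3RelIdeal : Ideal (MvPolynomial (Fin 6) ℚ) :=
  Ideal.span
    {(MvPolynomial.X 0 * MvPolynomial.X 1 - (MvPolynomial.X 2 + 1) : MvPolynomial (Fin 6) ℚ),
      MvPolynomial.X 2 * MvPolynomial.X 3 - (1 + MvPolynomial.X 0 * MvPolynomial.X 4),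
      MvPolynomial.X 4 * MvPolynomial.X 5 - (MvPolynomial.X 2 + 1)}

/-- The type `A₃` cluster algebra `A = ℚ[X₁,X₁',X₂,X₂',X₃,X₃']/⟨relations⟩`. -/
noncomputable abbrev a3ClusterAlg : Type := MvPolynomial (Fin 6) ℚ ⧸ a3RelIdeal

/-!
Setting `X₁ = X₃ = 0` in the relations forces `X₂ = -1` (from `X₁X₁' = X₂ + 1`) and then
`X₂' = -1` (from `X₂X₂' = 1 + X₁X₃`), while the third relation becomes trivial. So `A/⟨X₁, X₃⟩`
is `ℚ[X₁,…,X₃']` modulo `X₁, X₃, X₂ + 1, X₂' + 1`, which evaluation at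
`(0, Y₀, -1, -1, 0, Y₁)` identifies with `ℚ[Y₀, Y₁]`; being a domain, the ideal is prime.
-/

open MvPolynomial

noncomputable def Ideal.quotientSpanImageEquiv {R : Type*} [CommRing R] (I : Ideal R) (s : Set R) :
    (R ⧸ I) ⧸ Ideal.span (Ideal.Quotient.mk I '' s) ≃+* R ⧸ I ⊔ Ideal.span s :=
  (Ideal.quotEquivOfEq (Ideal.map_span _ s).symm).trans (DoubleQuot.quotQuotEquivQuotSup I _)

noncomputable abbrev a3RelIdealSupX₁X₃ : Ideal (MvPolynomial (Fin 6) ℚ) :=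
  a3RelIdeal ⊔ Ideal.span {X 0, X 4}

local notation "J" => a3RelIdealSupX₁X₃

noncomputable def a3EvalX₁X₃Zero : MvPolynomial (Fin 6) ℚ →ₐ[ℚ] MvPolynomial (Fin 2) ℚ :=
  aeval ![0, X 0, -1, -1, 0, X 1]

lemma a3RelIdealSupX₁X₃_le_ker : J ≤ RingHom.ker a3EvalX₁X₃Zero := by
  refine sup_le ?_ ?_ <;> rw [Ideal.span_le] <;> intro p hp
  · rcases hp with rfl | rfl | rfl <;> simp [a3EvalX₁X₃Zero]
  · rcases hp with rfl | rfl <;> simp [a3EvalX₁X₃Zero]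

lemma a3RelIdealSupX₁X₃_mk_X_eq :
    Ideal.Quotient.mk J (X 0) = 0 ∧ Ideal.Quotient.mk J (X 4) = 0 ∧
      Ideal.Quotient.mk J (X 2) = -1 ∧ Ideal.Quotient.mk J (X 3) = -1 := by
  have hrel : ∀ p ∈ a3RelIdeal, Ideal.Quotient.mk J p = 0 := fun p hp =>
    Ideal.Quotient.eq_zero_iff_mem.mpr (le_sup_left (a := a3RelIdeal) hp)
  have hvar : ∀ p ∈ Ideal.span {X 0, X 4}, Ideal.Quotient.mk J p = 0 := fun p hp =>
    Ideal.Quotient.eq_zero_iff_mem.mpr (le_sup_right (a := a3RelIdeal) hp)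
  have r₁ := hrel _ (Ideal.subset_span (Set.mem_insert _ _))
  have r₂ := hrel _ (Ideal.subset_span (Set.mem_insert_of_mem _ (Set.mem_insert _ _)))
  have e₀ := hvar _ (Ideal.subset_span (Set.mem_insert _ _))
  have e₄ := hvar _ (Ideal.subset_span (Set.mem_insert_of_mem _ rfl))
  simp only [map_sub, map_mul, map_add, map_one] at r₁ r₂
  have e₂ : Ideal.Quotient.mk J (X 2) = -1 := by
    linear_combination -r₁ + Ideal.Quotient.mk J (X 1) * e₀
  refine ⟨e₀, e₄, e₂, ?_⟩
  linear_combination -r₂ + Ideal.Quotient.mk J (X 3) * e₂ - Ideal.Quotient.mk J (X 4) * e₀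

noncomputable def a3QuotientSupX₁X₃Eval : MvPolynomial (Fin 6) ℚ ⧸ J →ₐ[ℚ] MvPolynomial (Fin 2) ℚ :=
  Ideal.Quotient.liftₐ J a3EvalX₁X₃Zero fun _ h => a3RelIdealSupX₁X₃_le_ker h

lemma a3QuotientSupX₁X₃Eval_mk (p : MvPolynomial (Fin 6) ℚ) :
    a3QuotientSupX₁X₃Eval (Ideal.Quotient.mk J p) = a3EvalX₁X₃Zero p :=
  rfl

noncomputable def a3QuotientSupX₁X₃Equiv :
    (MvPolynomial (Fin 6) ℚ ⧸ J) ≃ₐ[ℚ] MvPolynomial (Fin 2) ℚ :=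
  AlgEquiv.ofAlgHom a3QuotientSupX₁X₃Eval
    (aeval ![Ideal.Quotient.mk J (X 1), Ideal.Quotient.mk J (X 5)])
    (algHom_ext fun i => by fin_cases i <;> simp [a3QuotientSupX₁X₃Eval_mk, a3EvalX₁X₃Zero])
    (by
      obtain ⟨e₀, e₄, e₂, e₃⟩ := a3RelIdealSupX₁X₃_mk_X_eq
      refine Ideal.Quotient.algHom_ext _ (algHom_ext fun i => ?_)
      fin_cases i <;> simp [a3QuotientSupX₁X₃Eval_mk, a3EvalX₁X₃Zero, e₀, e₂, e₃, e₄])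

/-- In the type `A₃` cluster algebra, the ideal `⟨X₁, X₃⟩` is prime, with quotient
isomorphic to a polynomial ring in the two variables `X₁', X₃'`. -/
theorem stmt13 :
    (Ideal.span {Ideal.Quotient.mk a3RelIdeal (MvPolynomial.X 0),
        Ideal.Quotient.mk a3RelIdeal (MvPolynomial.X 4)}).IsPrime ∧
    Nonempty ((a3ClusterAlg ⧸ Ideal.span {Ideal.Quotient.mk a3RelIdeal (MvPolynomial.X 0),
        Ideal.Quotient.mk a3RelIdeal (MvPolynomial.X 4)}) ≃+*
      MvPolynomial (Fin 2) ℚ) := by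
  have hspan : Ideal.span {Ideal.Quotient.mk a3RelIdeal (X 0), Ideal.Quotient.mk a3RelIdeal (X 4)}
      = Ideal.span (Ideal.Quotient.mk a3RelIdeal '' {X 0, X 4}) := by
    rw [Set.image_insert_eq, Set.image_singleton]
  let e : (a3ClusterAlg ⧸ Ideal.span {Ideal.Quotient.mk a3RelIdeal (X 0),
      Ideal.Quotient.mk a3RelIdeal (X 4)}) ≃+* MvPolynomial (Fin 2) ℚ :=
    (Ideal.quotEquivOfEq hspan).trans <|
      (Ideal.quotientSpanImageEquiv a3RelIdeal _).trans a3QuotientSupX₁X₃Equiv.toRingEquiv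
  exact ⟨(Ideal.Quotient.isDomain_iff_prime _).mp (e.toMulEquiv.isDomain _), ⟨e⟩⟩
end

section
/- Let g, h be monomials with disjoint support in ℚ[x_1,...,x_k], at least one non-constant, and let a, b ≥ 1 with v_2(a) = v_2(b) (equal 2-adic valuations). Set l = v_2(a) and let c = gcd(a,b)/2^l. Then g^{2^l·c} + h^{2^l·c} divides both g^a + h^a and g^b + h^b in ℚ[x_1,...,x_k]. -/
/-!
If `d ∣ m` and `m / d` is odd, then `x ^ d + y ^ d ∣ x ^ m + y ^ m`, since `X + Y ∣ X ^ q + Y ^ q`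
for odd `q`. When `v₂(m) = v₂(n)`, the gcd `d` has the same `2`-adic valuation, so both `m / d`
and `n / d` are odd, and `2 ^ v₂(m) * (d / 2 ^ v₂(m)) = d`.
-/

namespace Nat

variable {p m n : ℕ} [Fact p.Prime]

theorem padicValNat_gcd_of_padicValNat_eq (hm : m ≠ 0) (hn : n ≠ 0)
    (h : padicValNat p m = padicValNat p n) : padicValNat p (m.gcd n) = padicValNat p m := by
  simp only [← factorization_def _ (Fact.out : p.Prime), factorization_gcd hm hn,
    Finsupp.inf_apply] at h ⊢
  rw [h, inf_idem]

theorem not_dvd_div_gcd_of_padicValNat_eq (hm : m ≠ 0) (hn : n ≠ 0)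
    (h : padicValNat p m = padicValNat p n) : ¬p ∣ m / m.gcd n := by
  have hd : m.gcd n ∣ m := gcd_dvd_left m n
  have hval : padicValNat p (m / m.gcd n) = 0 := by
    rw [padicValNat.div_of_dvd hd, padicValNat_gcd_of_padicValNat_eq hm hn h, Nat.sub_self]
  have hquot : m / m.gcd n ≠ 0 :=
    (Nat.div_pos (le_of_dvd hm.bot_lt hd) (gcd_pos_of_pos_left n hm.bot_lt)).ne'
  rcases padicValNat.eq_zero_iff.mp hval with hp | h0 | hndvd
  · exact absurd hp (Fact.out : p.Prime).ne_one
  · exact absurd h0 hquot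
  · exact hndvd

theorem odd_div_gcd_of_padicValNat_two_eq (hm : m ≠ 0) (hn : n ≠ 0)
    (h : padicValNat 2 m = padicValNat 2 n) : Odd (m / m.gcd n) :=
  Nat.odd_iff.mpr (Nat.two_dvd_ne_zero.mp (not_dvd_div_gcd_of_padicValNat_eq hm hn h))

end Nat

theorem pow_add_pow_dvd_pow_add_pow_of_odd_div {R : Type*} [CommRing R] (x y : R) {d m : ℕ}
    (hd : d ∣ m) (hodd : Odd (m / d)) : x ^ d + y ^ d ∣ x ^ m + y ^ m := by
  simpa only [← pow_mul, Nat.mul_div_cancel' hd] using hodd.add_dvd_pow_add_pow (x ^ d) (y ^ d)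

theorem stmt16_general {k : ℕ}
    (g h : MvPolynomial (Fin k) ℚ)
    (m n : ℕ) (hm : 1 ≤ m) (hn : 1 ≤ n)
    (h2 : padicValNat 2 m = padicValNat 2 n) :
    (g ^ (2 ^ padicValNat 2 m * (Nat.gcd m n / 2 ^ padicValNat 2 m)) +
        h ^ (2 ^ padicValNat 2 m * (Nat.gcd m n / 2 ^ padicValNat 2 m))) ∣ g ^ m + h ^ m ∧
    (g ^ (2 ^ padicValNat 2 m * (Nat.gcd m n / 2 ^ padicValNat 2 m)) +
        h ^ (2 ^ padicValNat 2 m * (Nat.gcd m n / 2 ^ padicValNat 2 m))) ∣ g ^ n + h ^ n := by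
  have hm0 : m ≠ 0 := by omega
  have hn0 : n ≠ 0 := by omega
  have hgcd : 2 ^ padicValNat 2 m * (m.gcd n / 2 ^ padicValNat 2 m) = m.gcd n := by
    rw [← Nat.padicValNat_gcd_of_padicValNat_eq hm0 hn0 h2]
    exact Nat.mul_div_cancel' pow_padicValNat_dvd
  rw [hgcd]
  refine ⟨pow_add_pow_dvd_pow_add_pow_of_odd_div g h (Nat.gcd_dvd_left m n)
      (Nat.odd_div_gcd_of_padicValNat_two_eq hm0 hn0 h2), ?_⟩
  rw [Nat.gcd_comm]
  exact pow_add_pow_dvd_pow_add_pow_of_odd_div g h (Nat.gcd_dvd_left n m)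
    (Nat.odd_div_gcd_of_padicValNat_two_eq hn0 hm0 h2.symm)

/-- Let `g, h` be monomials with disjoint support in `ℚ[x₁,…,x_k]`, at least one
non-constant, and `m, n ≥ 1` with equal `2`-adic valuations. With `l = v₂(m)` and
`c = gcd(m,n)/2^l`, the polynomial `g^{2^l c} + h^{2^l c}` divides both
`g^m + h^m` and `g^n + h^n`. -/
theorem stmt16 {k : ℕ}
    (u v : Fin k → ℕ) (a b : ℚ) (ha : a ≠ 0) (hb : b ≠ 0)
    (hdisj : ∀ i, u i = 0 ∨ v i = 0) (hnc : u ≠ 0 ∨ v ≠ 0)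
    (g h : MvPolynomial (Fin k) ℚ)
    (hg : g = MvPolynomial.C a * ∏ i, MvPolynomial.X i ^ u i)
    (hh : h = MvPolynomial.C b * ∏ i, MvPolynomial.X i ^ v i)
    (m n : ℕ) (hm : 1 ≤ m) (hn : 1 ≤ n)
    (h2 : padicValNat 2 m = padicValNat 2 n) :
    (g ^ (2 ^ padicValNat 2 m * (Nat.gcd m n / 2 ^ padicValNat 2 m)) +
        h ^ (2 ^ padicValNat 2 m * (Nat.gcd m n / 2 ^ padicValNat 2 m))) ∣ g ^ m + h ^ m ∧
    (g ^ (2 ^ padicValNat 2 m * (Nat.gcd m n / 2 ^ padicValNat 2 m)) +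
        h ^ (2 ^ padicValNat 2 m * (Nat.gcd m n / 2 ^ padicValNat 2 m))) ∣ g ^ n + h ^ n :=
  stmt16_general g h m n hm hn h2
end
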